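/- arXiv:1908.06720 — 2 statements merged into one kernel-verified Lean document; each statement's English description precedes it below -/
import Mathlib

section
/- For any two block vectors x and y (with the same block structure), the Jordan product satisfies the submultiplicativity property ‖x ∘ y‖_F ≤ ‖x‖₂ · ‖y‖_F. -/
set_option synthInstance.maxHeartbeats 1000000
set_option maxHeartbeats 1000000

noncomputable section
open scoped BigOperators

namespace SOCP

/-- `E k` is `ℝ^(k+1)`, written as `(x₀; x̄)` with `x̄ ∈ ℝ^k`. -/
abbrev E (k : ℕ) := EuclideanSpace ℝ (Fin (k + 1))

/-- Build an element of `E k` from a plain function. -/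
def mk {k : ℕ} (f : Fin (k + 1) → ℝ) : E k := (WithLp.equiv 2 _).symm f

/-- The Euclidean norm `‖x̄‖` of the tail of `x`. -/
def tnorm {k : ℕ} (x : E k) : ℝ := Real.sqrt (∑ i : Fin k, (x i.succ) ^ 2)

/-- First Jordan eigenvalue `λ₁(x) = x₀ + ‖x̄‖`. -/
def lam1 {k : ℕ} (x : E k) : ℝ := x 0 + tnorm x

/-- Second Jordan eigenvalue `λ₂(x) = x₀ − ‖x̄‖`. -/
def lam2 {k : ℕ} (x : E k) : ℝ := x 0 - tnorm x

/-- Jordan product `x ∘ y = (xᵀy; x₀ȳ + y₀x̄)`. -/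
def jmul {k : ℕ} (x y : E k) : E k :=
  mk (fun j => if j = 0 then ∑ i, x i * y i else x 0 * y j + y 0 * x j)

/-- The Jordan identity `e = (1; 0)`. -/
def idE {k : ℕ} : E k := mk (fun j => if j = 0 then 1 else 0)

/-- First Jordan frame vector `c₁(x) = ½(1; x̄/‖x̄‖)`. -/
def c1 {k : ℕ} (x : E k) : E k :=
  mk (fun j => if j = 0 then 1 / 2 else x j / (2 * tnorm x))

/-- Second Jordan frame vector `c₂(x) = ½(1; −x̄/‖x̄‖)`. -/
def c2 {k : ℕ} (x : E k) : E k :=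
  mk (fun j => if j = 0 then 1 / 2 else -x j / (2 * tnorm x))

/-- Arrowhead matrix `Arw(x) = [[x₀, x̄ᵀ], [x̄, x₀ I]]`. -/
def Arw {k : ℕ} (x : E k) : Matrix (Fin (k + 1)) (Fin (k + 1)) ℝ :=
  Matrix.of fun i j =>
    if i = 0 then x j else if j = 0 then x i else if i = j then x 0 else 0

/-- Quadratic representation `Q_x = 2 Arw(x)² − Arw(x ∘ x)`. -/
def Qmat {k : ℕ} (x : E k) : Matrix (Fin (k + 1)) (Fin (k + 1)) ℝ :=
  (2 : ℝ) • (Arw x * Arw x) - Arw (jmul x x)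

/-- Jordan square root `x^{1/2} = √λ₁ c₁ + √λ₂ c₂` (equal to `(√x₀; 0)` when `x̄ = 0`). -/
def jsqrt {k : ℕ} (x : E k) : E k :=
  if tnorm x = 0 then mk (fun j => if j = 0 then Real.sqrt (x 0) else 0)
  else Real.sqrt (lam1 x) • c1 x + Real.sqrt (lam2 x) • c2 x

/-- `T_x := Q_{x^{1/2}}`. -/
def Tmat {k : ℕ} (x : E k) : Matrix (Fin (k + 1)) (Fin (k + 1)) ℝ := Qmat (jsqrt x)

/-- Jordan inverse `x⁻¹ = λ₁⁻¹ c₁ + λ₂⁻¹ c₂` (equal to `(x₀⁻¹; 0)` when `x̄ = 0`). -/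
def jinv {k : ℕ} (x : E k) : E k :=
  if tnorm x = 0 then mk (fun j => if j = 0 then (x 0)⁻¹ else 0)
  else (lam1 x)⁻¹ • c1 x + (lam2 x)⁻¹ • c2 x

/-- Matrix-vector product, as a map on `E k`. -/
def mulVecE {k : ℕ} (M : Matrix (Fin (k + 1)) (Fin (k + 1)) ℝ) (v : E k) : E k :=
  mk (M.mulVec (WithLp.equiv 2 _ v))

/-- Block vectors `x = (x₁; …; x_r)` with `x_i ∈ ℝ^{d i + 2}` (so each block has dim ≥ 2). -/
abbrev BV {r : ℕ} (d : Fin r → ℕ) : Type := (i : Fin r) → E (d i + 1)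

variable {r : ℕ} {d : Fin r → ℕ}

/-- Spectral norm `‖x‖₂ = max_i (|x_{i,0}| + ‖x̄_i‖)`. -/
def specNorm (x : BV d) : ℝ := ⨆ i, (|x i 0| + tnorm (x i))

/-- Frobenius norm `‖x‖_F = √(Σ_i (λ₁(x_i)² + λ₂(x_i)²))`. -/
def frobNorm (x : BV d) : ℝ := Real.sqrt (∑ i, (lam1 (x i) ^ 2 + lam2 (x i) ^ 2))

/-- Minimum Jordan eigenvalue `λ_min(x) = min_i λ₂(x_i)`. -/
def lamMin (x : BV d) : ℝ := ⨅ i, lam2 (x i)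

/-- Blockwise Jordan product. -/
def jmulB (x y : BV d) : BV d := fun i => jmul (x i) (y i)

/-- Block identity element. -/
def idB : BV d := fun _ => idE

/-- Membership in the interior of the product of Lorentz cones: `‖x̄_i‖ < x_{i,0}` for all `i`. -/
def inIntLB (x : BV d) : Prop := ∀ i, tnorm (x i) < x i 0

/-- Euclidean inner product of the concatenated vectors. -/
def ip (x y : BV d) : ℝ := ∑ i, ∑ j, x i j * y i j

/-- Block-diagonal application of `T_x`: `(T_x s)_i = T_{x_i} s_i`. -/
def TB (x s : BV d) : BV d := fun i => mulVecE (Tmat (x i)) (s i)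

/-- Distance from the central path `d(x, s, ν) = ‖T_x s − ν e‖_F`. -/
def cdist (x s : BV d) (ν : ℝ) : ℝ := frobNorm (TB x s - ν • (idB : BV d))

/-- Blockwise Jordan inverse. -/
def jinvB (x : BV d) : BV d := fun i => jinv (x i)

/-!
On a single block, `x ∘ y = x₀ y + (x̄ᵀȳ; y₀ x̄)`, and by Cauchy–Schwarz the second summand has
norm at most `‖x̄‖ ‖y‖`; so `‖x ∘ y‖ ≤ (|x₀| + ‖x̄‖) ‖y‖`, the multiplier being the largest
absolute eigenvalue of the arrowhead matrix `Arw(x)`. Squaring, bounding `|x_{i,0}| + ‖x̄_i‖` by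
`‖x‖₂`, and summing over the blocks gives the claim, since `‖·‖_F² = 2 ∑_i ‖·_i‖²`.
-/

lemma tnorm_nonneg {k : ℕ} (x : E k) : 0 ≤ tnorm x := Real.sqrt_nonneg _

lemma tnorm_sq {k : ℕ} (x : E k) : tnorm x ^ 2 = ∑ i : Fin k, x i.succ ^ 2 :=
  Real.sq_sqrt (Finset.sum_nonneg fun _ _ => sq_nonneg _)

lemma norm_sq_eq_sq_add_tnorm_sq {k : ℕ} (x : E k) : ‖x‖ ^ 2 = x 0 ^ 2 + tnorm x ^ 2 := by
  rw [EuclideanSpace.real_norm_sq_eq, Fin.sum_univ_succ, tnorm_sq]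

lemma lam1_sq_add_lam2_sq {k : ℕ} (x : E k) : lam1 x ^ 2 + lam2 x ^ 2 = 2 * ‖x‖ ^ 2 := by
  rw [lam1, lam2, norm_sq_eq_sq_add_tnorm_sq]
  ring

lemma jmul_apply_zero {k : ℕ} (x y : E k) :
    jmul x y 0 = x 0 * y 0 + ∑ j : Fin k, x j.succ * y j.succ := by
  simp [jmul, mk, Fin.sum_univ_succ]

lemma jmul_apply_succ {k : ℕ} (x y : E k) (j : Fin k) :
    jmul x y j.succ = x 0 * y j.succ + y 0 * x j.succ := by
  simp [jmul, mk, Fin.succ_ne_zero]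

lemma norm_jmul_sub_smul_le {k : ℕ} (x y : E k) :
    ‖jmul x y - x 0 • y‖ ≤ tnorm x * ‖y‖ := by
  set s := ∑ j : Fin k, x j.succ * y j.succ
  have cauchy_schwarz : s ^ 2 ≤ tnorm x ^ 2 * tnorm y ^ 2 := by
    rw [tnorm_sq, tnorm_sq]
    exact Finset.sum_mul_sq_le_sq_mul_sq _ _ _
  have norm_sq_eq : ‖jmul x y - x 0 • y‖ ^ 2 = s ^ 2 + y 0 ^ 2 * tnorm x ^ 2 := by
    simp only [EuclideanSpace.real_norm_sq_eq, Fin.sum_univ_succ, PiLp.sub_apply,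
      PiLp.smul_apply, smul_eq_mul, jmul_apply_zero, jmul_apply_succ, add_sub_cancel_left,
      mul_pow, tnorm_sq, Finset.mul_sum]
    rfl
  rw [← pow_le_pow_iff_left₀ (norm_nonneg _) (by positivity [tnorm_nonneg x]) two_ne_zero,
    norm_sq_eq, mul_pow, norm_sq_eq_sq_add_tnorm_sq y]
  linear_combination cauchy_schwarz

lemma norm_jmul_le {k : ℕ} (x y : E k) : ‖jmul x y‖ ≤ (|x 0| + tnorm x) * ‖y‖ :=
  calc ‖jmul x y‖ = ‖x 0 • y + (jmul x y - x 0 • y)‖ := by rw [add_sub_cancel]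
    _ ≤ ‖x 0 • y‖ + ‖jmul x y - x 0 • y‖ := norm_add_le _ _
    _ ≤ |x 0| * ‖y‖ + tnorm x * ‖y‖ := by
        rw [norm_smul, Real.norm_eq_abs]
        gcongr
        exact norm_jmul_sub_smul_le x y
    _ = (|x 0| + tnorm x) * ‖y‖ := by ring

lemma le_specNorm (x : BV d) (i : Fin r) : |x i 0| + tnorm (x i) ≤ specNorm x :=
  le_ciSup (f := fun i => |x i 0| + tnorm (x i)) (Set.finite_range _).bddAbove i

lemma specNorm_nonneg (x : BV d) : 0 ≤ specNorm x :=
  Real.iSup_nonneg fun _ => add_nonneg (abs_nonneg _) (tnorm_nonneg _)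

lemma frobNorm_eq (x : BV d) : frobNorm x = Real.sqrt (2 * ∑ i, ‖x i‖ ^ 2) := by
  simp only [frobNorm, lam1_sq_add_lam2_sq, Finset.mul_sum]

lemma norm_jmulB_apply_le (x y : BV d) (i : Fin r) :
    ‖jmulB x y i‖ ≤ specNorm x * ‖y i‖ :=
  (norm_jmul_le (x i) (y i)).trans
    (mul_le_mul_of_nonneg_right (le_specNorm x i) (norm_nonneg _))

theorem frobNorm_jmulB_le_general {r : ℕ} {d : Fin r → ℕ} (x y : BV d) :
    frobNorm (jmulB x y) ≤ specNorm x * frobNorm y := by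
  have blockwise : ∀ i, ‖jmulB x y i‖ ^ 2 ≤ specNorm x ^ 2 * ‖y i‖ ^ 2 := fun i => by
    rw [← mul_pow]
    exact pow_le_pow_left₀ (norm_nonneg _) (norm_jmulB_apply_le x y i) 2
  calc frobNorm (jmulB x y) = Real.sqrt (2 * ∑ i, ‖jmulB x y i‖ ^ 2) := frobNorm_eq _
    _ ≤ Real.sqrt (2 * ∑ i, specNorm x ^ 2 * ‖y i‖ ^ 2) := by
        gcongr with i
        exact blockwise i
    _ = specNorm x * frobNorm y := by
        rw [← Finset.mul_sum, mul_left_comm, Real.sqrt_mul (sq_nonneg _),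
          Real.sqrt_sq (specNorm_nonneg x), frobNorm_eq]

/-- Submultiplicativity of the Jordan product: `‖x ∘ y‖_F ≤ ‖x‖₂ · ‖y‖_F`. -/
theorem frobNorm_jmulB_le {r : ℕ} {d : Fin r → ℕ} (hr : 0 < r) (x y : BV d) :
    frobNorm (jmulB x y) ≤ specNorm x * frobNorm y :=
  frobNorm_jmulB_le_general x y

end SOCP
end
end

section
/- (Preservation of strict feasibility under approximate Newton steps.) Let η = χ = 0.01, ξ = 0.001, and Θ := √(2η² + 4χ²)/(1 − 3η). Let s, Δx, Δs, Δ̂x, Δ̂s be block vectors of rank r (same block structure) such that ‖s − e‖_F ≤ η, ‖Δx‖_F ≤ Θ/√2, ‖Δs‖_F ≤ √2·Θ, ‖Δ̂x − Δx‖_F ≤ ξ, and ‖Δ̂s − Δs‖_F ≤ ξ. Then λ_min(e + Δ̂x) ≥ 0.8 and λ_min(s + Δ̂s) ≥ 0.8; in particular, e + Δ̂x ∈ int 𝓛 and s + Δ̂s ∈ int 𝓛. -/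
/-!
Perturbing a block by `y` moves `λ₂ = x₀ − ‖x̄‖` by at most `|y₀| + ‖ȳ‖`, which is bounded by
`‖y‖_F`; hence `λ_min` is 1-Lipschitz for the Frobenius norm. Both iterates are `e` plus a few
perturbations of total Frobenius norm below `0.2` (as `Θ < 0.05`), while `λ_min(e) = 1`.
-/

set_option synthInstance.maxHeartbeats 1000000
set_option maxHeartbeats 1000000

noncomputable section
open scoped BigOperators

namespace SOCP

variable {r : ℕ} {d : Fin r → ℕ}

def tail {k : ℕ} (x : E k) : EuclideanSpace ℝ (Fin k) := WithLp.toLp 2 fun i => x i.succ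

lemma tail_add {k : ℕ} (u v : E k) : tail (u + v) = tail u + tail v := rfl

lemma tnorm_eq_norm_tail {k : ℕ} (x : E k) : tnorm x = ‖tail x‖ := by
  simp [tnorm, tail, EuclideanSpace.norm_eq]

lemma tnorm_add_le {k : ℕ} (u v : E k) : tnorm (u + v) ≤ tnorm u + tnorm v := by
  simpa only [tnorm_eq_norm_tail, tail_add] using norm_add_le (tail u) (tail v)

lemma tnorm_idE {k : ℕ} : tnorm (idE : E k) = 0 := by
  simp [tnorm, idE, mk, PiLp.toLp_apply, Fin.succ_ne_zero]

lemma lam2_idE {k : ℕ} : lam2 (idE : E k) = 1 := by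
  rw [lam2, tnorm_idE]
  simp [idE, mk, PiLp.toLp_apply]

lemma lam2_sub_le_lam2_add {k : ℕ} (u v : E k) :
    lam2 u - (|v 0| + tnorm v) ≤ lam2 (u + v) := by
  have h₀ : (u + v) 0 = u 0 + v 0 := rfl
  have := tnorm_add_le u v
  have := neg_abs_le (v 0)
  simp only [lam2, h₀]
  linarith

lemma abs_zero_add_tnorm_le_frobNorm (x : BV d) (i : Fin r) :
    |x i 0| + tnorm (x i) ≤ frobNorm x := by
  have hsq : (|x i 0| + tnorm (x i)) ^ 2 ≤ lam1 (x i) ^ 2 + lam2 (x i) ^ 2 := by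
    simp only [lam1, lam2]
    nlinarith [sq_abs (x i 0), sq_nonneg (|x i 0| - tnorm (x i))]
  have hblock : lam1 (x i) ^ 2 + lam2 (x i) ^ 2 ≤ ∑ j, (lam1 (x j) ^ 2 + lam2 (x j) ^ 2) :=
    Finset.single_le_sum (f := fun j => lam1 (x j) ^ 2 + lam2 (x j) ^ 2)
      (fun j _ => by positivity) (Finset.mem_univ i)
  exact (Real.le_sqrt (add_nonneg (abs_nonneg _) (Real.sqrt_nonneg _))
    (by positivity)).2 (hsq.trans hblock)

lemma lamMin_le_lam2 (x : BV d) (i : Fin r) : lamMin x ≤ lam2 (x i) :=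
  ciInf_le (Set.finite_range _).bddBelow i

lemma lamMin_idB [Nonempty (Fin r)] : lamMin (idB : BV d) = 1 := by
  simp [lamMin, idB, lam2_idE]

lemma lamMin_sub_frobNorm_le_lamMin_add [Nonempty (Fin r)] (x y : BV d) :
    lamMin x - frobNorm y ≤ lamMin (x + y) :=
  le_ciInf fun i => calc
    lamMin x - frobNorm y ≤ lam2 (x i) - (|y i 0| + tnorm (y i)) :=
      sub_le_sub (lamMin_le_lam2 x i) (abs_zero_add_tnorm_le_frobNorm y i)
    _ ≤ lam2 ((x + y) i) := lam2_sub_le_lam2_add (x i) (y i)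

lemma inIntLB_of_lamMin_pos {x : BV d} (hx : 0 < lamMin x) : inIntLB x := fun i => by
  have := hx.trans_le (lamMin_le_lam2 x i)
  rw [lam2] at this
  linarith

/-- Preservation of strict feasibility under approximate Newton steps,
with `η = χ = 0.01`, `ξ = 0.001` and `Θ = √(2η² + 4χ²)/(1 − 3η)`. -/
theorem strict_feasibility_preserved {r : ℕ} {d : Fin r → ℕ} (hr : 0 < r)
    (s dx ds dx' ds' : BV d) (Θ : ℝ)
    (hΘ : Θ = Real.sqrt (2 * 0.01 ^ 2 + 4 * 0.01 ^ 2) / (1 - 3 * 0.01))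
    (hs : frobNorm (s - idB) ≤ 0.01)
    (hdx : frobNorm dx ≤ Θ / Real.sqrt 2)
    (hds : frobNorm ds ≤ Real.sqrt 2 * Θ)
    (hdx' : frobNorm (dx' - dx) ≤ 0.001)
    (hds' : frobNorm (ds' - ds) ≤ 0.001) :
    (0.8 ≤ lamMin (idB + dx') ∧ 0.8 ≤ lamMin (s + ds')) ∧
    (inIntLB (idB + dx') ∧ inIntLB (s + ds')) := by
  have : Nonempty (Fin r) := ⟨⟨0, hr⟩⟩
  have hΘ₀ : 0 ≤ Θ := by rw [hΘ]; positivity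
  have hΘ_le : Θ ≤ 0.05 := by
    rw [hΘ, div_le_iff₀ (by norm_num), Real.sqrt_le_left (by norm_num)]
    norm_num
  have hdx_le : frobNorm dx ≤ 0.05 :=
    hdx.trans ((div_le_self hΘ₀ Real.one_lt_sqrt_two.le).trans hΘ_le)
  have hds_le : frobNorm ds ≤ 0.1 := by
    have : Real.sqrt 2 ≤ 2 := by rw [Real.sqrt_le_left zero_le_two]; norm_num
    nlinarith
  have hx : 0.8 ≤ lamMin (idB + dx') := by
    have h₁ := lamMin_sub_frobNorm_le_lamMin_add (idB : BV d) dx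
    have h₂ := lamMin_sub_frobNorm_le_lamMin_add (idB + dx) (dx' - dx)
    rw [lamMin_idB] at h₁
    rw [add_add_sub_cancel] at h₂
    linarith
  have hs' : 0.8 ≤ lamMin (s + ds') := by
    have h₁ := lamMin_sub_frobNorm_le_lamMin_add (idB : BV d) (s - idB)
    have h₂ := lamMin_sub_frobNorm_le_lamMin_add s ds
    have h₃ := lamMin_sub_frobNorm_le_lamMin_add (s + ds) (ds' - ds)
    rw [lamMin_idB, add_sub_cancel] at h₁
    rw [add_add_sub_cancel] at h₃
    linarith
  exact ⟨⟨hx, hs'⟩, inIntLB_of_lamMin_pos (by linarith), inIntLB_of_lamMin_pos (by linarith)⟩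

end SOCP
end
end
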